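/- If two finite sequences over an alphabet have Levenshtein (edit) distance exactly d, then the Euclidean distance between their bag-of-letters count vectors is at most √2·d. -/

import Mathlib

namespace Levenshtein

/-- A cost structure for the Levenshtein edit distance (as in the former Mathlib). -/
structure Cost (α β δ : Type*) where
  /-- Cost to delete an element from a list. -/
  delete : α → δ
  /-- Cost in insert an element into a list. -/
  insert : β → δ
  /-- Cost to substitute one element for another in a list. -/
  substitute : α → β → δ

/-- The default cost structure, for which all operations cost `1`. -/
def defaultCost {α : Type*} [DecidableEq α] : Cost α α ℕ where
  delete _ := 1
  insert _ := 1
  substitute a b := if a = b then 0 else 1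

/-- (Implementation detail for `levenshtein`.) -/
def impl {α β δ : Type*} [AddZeroClass δ] [Min δ] (C : Cost α β δ)
    (xs : List α) (y : β) (d : {r : List δ // 0 < r.length}) : {r : List δ // 0 < r.length} :=
  let ⟨ds, w⟩ := d
  xs.zip (ds.zip ds.tail) |>.foldr
    (init := ⟨[C.insert y + ds.getLast (List.length_pos_iff.mp w)], by simp⟩)
    (fun ⟨x, d₀, d₁⟩ ⟨r, w⟩ =>
      ⟨min (C.delete x + r[0]) (min (C.insert y + d₀) (C.substitute x y + d₁)) :: r, by simp⟩)

end Levenshtein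

open Levenshtein

/-- `suffixLevenshtein C xs ys` computes the Levenshtein distance
(using the cost functions provided by a `C : Cost α β δ`)
from each suffix of the list `xs` to the list `ys`. -/
def suffixLevenshtein {α β δ : Type*} [AddZeroClass δ] [Min δ] (C : Levenshtein.Cost α β δ)
    (xs : List α) (ys : List β) : {r : List δ // 0 < r.length} :=
  ys.foldr
    (impl C xs)
    (xs.foldr (init := ⟨[0], by simp⟩) (fun a ⟨ds, _⟩ => ⟨(C.delete a + ds[0]) :: ds, by simp⟩))

/-- `levenshtein C xs ys` computes the Levenshtein distance
(using the cost functions provided by a `C : Cost α β δ`)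
from the list `xs` to the list `ys`. -/
def levenshtein {α β δ : Type*} [AddZeroClass δ] [Min δ] (C : Levenshtein.Cost α β δ)
    (xs : List α) (ys : List β) : δ :=
  let ⟨r, _⟩ := suffixLevenshtein C xs ys
  r[0]


/-! Under the bag-of-letters map `w ↦ (count a w)ₐ ∈ ℓ²(σ)`, inserting or deleting a letter `a`
moves the image by the unit vector `eₐ`, and substituting `a` by `b` moves it by `e_b - eₐ`, of
norm `√2`. Following the recursion of the edit distance, the triangle inequality bounds the
distance of the images by `√2` times the number of edits. -/

namespace Levenshtein

section Recursion

variable {α β δ : Type*} [AddZeroClass δ] [Min δ] (C : Cost α β δ)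

theorem impl_length (xs : List α) (y : β) (d : {r : List δ // 0 < r.length})
    (w : d.1.length = xs.length + 1) :
    (impl C xs y d).1.length = xs.length + 1 := by
  induction xs generalizing d with
  | nil => rfl
  | cons x xs ih =>
    match d, w with
    | ⟨_ :: d₂ :: ds, _⟩, w =>
      dsimp [impl]
      congr 1
      exact ih ⟨d₂ :: ds, by simp⟩ (by simpa using w)

theorem suffixLevenshtein_length (xs : List α) (ys : List β) :
    (suffixLevenshtein C xs ys).1.length = xs.length + 1 := by
  induction ys with
  | nil =>
    induction xs with
    | nil => rfl
    | cons _ xs ih => simpa [suffixLevenshtein] using ih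
  | cons y ys ih => exact impl_length C xs y _ ih

theorem impl_cons_tail (x : α) (xs : List α) (y : β) (d : δ) (ds : List δ) (w)
    (w' : 0 < ds.length) :
    (impl C (x :: xs) y ⟨d :: ds, w⟩).1.tail = (impl C xs y ⟨ds, w'⟩).1 :=
  match ds, w' with | _ :: _, _ => rfl

theorem impl_cons_fst_zero (x : α) (xs : List α) (y : β) (d : δ) (ds : List δ) (w h)
    (w' : 0 < ds.length) :
    (impl C (x :: xs) y ⟨d :: ds, w⟩).1[0]'h =
      let ⟨r, _⟩ := impl C xs y ⟨ds, w'⟩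
      min (C.delete x + r[0]) (min (C.insert y + d) (C.substitute x y + ds[0])) :=
  match ds, w' with | _ :: _, _ => rfl

theorem suffixLevenshtein_cons₁ (x : α) (xs : List α) (ys : List β) :
    suffixLevenshtein C (x :: xs) ys =
      ⟨levenshtein C (x :: xs) ys :: (suffixLevenshtein C xs ys).1, by simp⟩ := by
  apply Subtype.ext
  induction ys with
  | nil => rfl
  | cons y ys ih =>
    have hL : (suffixLevenshtein C (x :: xs) (y :: ys)).1 ≠ [] := by
      simp [← List.length_pos_iff, suffixLevenshtein_length]
    rw [← List.cons_head_tail hL]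
    congr 1
    · exact (List.getElem_zero _).symm
    change (impl C (x :: xs) y (suffixLevenshtein C (x :: xs) ys)).1.tail = _
    generalize suffixLevenshtein C (x :: xs) ys = s at ih ⊢
    obtain ⟨L, _⟩ := s
    subst ih
    exact impl_cons_tail C x xs y _ _ _ (by simp [suffixLevenshtein_length])

theorem levenshtein_nil_nil : levenshtein C ([] : List α) ([] : List β) = 0 :=
  rfl

theorem levenshtein_nil_cons (y : β) (ys : List β) :
    levenshtein C [] (y :: ys) = C.insert y + levenshtein C [] ys := by
  obtain ⟨v, hv⟩ := List.length_eq_one_iff.mp (suffixLevenshtein_length C [] ys)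
  change (impl C [] y (suffixLevenshtein C [] ys)).1[0]'(impl C [] y _).2 =
    C.insert y + (suffixLevenshtein C [] ys).1[0]'(suffixLevenshtein C [] ys).2
  generalize suffixLevenshtein C [] ys = s at hv ⊢
  obtain ⟨L, _⟩ := s
  subst hv
  rfl

theorem levenshtein_cons_nil (x : α) (xs : List α) :
    levenshtein C (x :: xs) ([] : List β) = C.delete x + levenshtein C xs ([] : List β) :=
  rfl

theorem levenshtein_cons_cons (x : α) (xs : List α) (y : β) (ys : List β) :
    levenshtein C (x :: xs) (y :: ys) =
      min (C.delete x + levenshtein C xs (y :: ys))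
        (min (C.insert y + levenshtein C (x :: xs) ys)
          (C.substitute x y + levenshtein C xs ys)) := by
  change (impl C (x :: xs) y (suffixLevenshtein C (x :: xs) ys)).1[0]'(impl C _ y _).2 = _
  rw [suffixLevenshtein_cons₁,
    impl_cons_fst_zero C x xs y _ _ _ _ (suffixLevenshtein C xs ys).2]
  rfl

end Recursion

end Levenshtein

section

variable {α M : Type*} [PseudoMetricSpace M]

theorem dist_le_mul_levenshtein (C : Cost α α ℕ) (f : List α → M) (K : ℝ)
    (hdelete : ∀ a w, dist (f (a :: w)) (f w) ≤ K * C.delete a)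
    (hinsert : ∀ a w, dist (f w) (f (a :: w)) ≤ K * C.insert a)
    (hsubstitute : ∀ a b x y,
      dist (f (a :: x)) (f (b :: y)) ≤ K * C.substitute a b + dist (f x) (f y))
    (x y : List α) : dist (f x) (f y) ≤ K * levenshtein C x y := by
  induction x generalizing y with
  | nil =>
    induction y with
    | nil => simp [levenshtein_nil_nil]
    | cons b y ih =>
      rw [levenshtein_nil_cons]
      push_cast
      linarith [dist_triangle (f []) (f y) (f (b :: y)), hinsert b y]
  | cons a x ihx =>
    induction y with
    | nil =>
      rw [levenshtein_cons_nil]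
      push_cast
      linarith [dist_triangle (f (a :: x)) (f x) (f []), hdelete a x, ihx []]
    | cons b y ihy =>
      have hdel :
          dist (f (a :: x)) (f (b :: y)) ≤ K * (C.delete a + levenshtein C x (b :: y) : ℕ) := by
        push_cast
        linarith [dist_triangle (f (a :: x)) (f x) (f (b :: y)), hdelete a x, ihx (b :: y)]
      have hins :
          dist (f (a :: x)) (f (b :: y)) ≤ K * (C.insert b + levenshtein C (a :: x) y : ℕ) := by
        push_cast
        linarith [dist_triangle (f (a :: x)) (f y) (f (b :: y)), hinsert b y]
      have hsub :
          dist (f (a :: x)) (f (b :: y)) ≤ K * (C.substitute a b + levenshtein C x y : ℕ) := by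
        push_cast
        linarith [hsubstitute a b x y, ihx y]
      rw [levenshtein_cons_cons]
      rcases min_choice (C.delete a + levenshtein C x (b :: y))
          (min (C.insert b + levenshtein C (a :: x) y) (C.substitute a b + levenshtein C x y))
        with h | h <;> rw [h]
      · exact hdel
      · rcases min_choice (C.insert b + levenshtein C (a :: x) y)
          (C.substitute a b + levenshtein C x y) with h | h <;> rw [h]
        · exact hins
        · exact hsub

end

theorem Orthonormal.norm_sub_eq_sqrt_two {ι E : Type*} [SeminormedAddCommGroup E]
    [InnerProductSpace ℝ E] {v : ι → E} (hv : Orthonormal ℝ v) {i j : ι} (hij : i ≠ j) :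
    ‖v i - v j‖ = √2 := by
  have hsq : ‖v i - v j‖ ^ 2 = 2 := by
    rw [norm_sub_sq_real, hv.inner_eq_zero hij, hv.norm_eq_one, hv.norm_eq_one]
    norm_num
  rw [← hsq, Real.sqrt_sq (norm_nonneg _)]

section BagOfLetters

variable {σ : Type*} [DecidableEq σ]

noncomputable def bagOfLetters (w : List σ) : EuclideanSpace ℝ σ :=
  WithLp.toLp 2 fun a => (w.count a : ℝ)

theorem bagOfLetters_cons (a : σ) (w : List σ) :
    bagOfLetters (a :: w) = bagOfLetters w + EuclideanSpace.single a 1 := by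
  ext c
  by_cases h : c = a
  · simp [bagOfLetters, h]
  · simp [bagOfLetters, h, Ne.symm h]

variable [Fintype σ]

theorem dist_bagOfLetters_cons (a : σ) (w : List σ) :
    dist (bagOfLetters (a :: w)) (bagOfLetters w) = 1 := by
  simp [dist_eq_norm, bagOfLetters_cons]

theorem dist_bagOfLetters_cons_cons_le (a b : σ) (x y : List σ) :
    dist (bagOfLetters (a :: x)) (bagOfLetters (b :: y)) ≤
      √2 * defaultCost.substitute a b + dist (bagOfLetters x) (bagOfLetters y) := by
  rw [dist_eq_norm, dist_eq_norm, bagOfLetters_cons, bagOfLetters_cons, add_sub_add_comm,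
    add_comm]
  refine (norm_add_le _ _).trans ?_
  gcongr
  simp only [defaultCost]
  split_ifs with hab
  · simp [hab]
  · rw [EuclideanSpace.orthonormal_single.norm_sub_eq_sqrt_two hab, Nat.cast_one, mul_one]

theorem dist_bagOfLetters (x y : List σ) :
    dist (bagOfLetters x) (bagOfLetters y) = √(∑ a, ((x.count a : ℝ) - y.count a) ^ 2) := by
  simp [EuclideanSpace.dist_eq, bagOfLetters, Real.dist_eq, sq_abs]

end BagOfLetters

/-- If two words have Levenshtein distance exactly `d`, the Euclidean distance
between their bag-of-letters count vectors is at most `√2 * d`. -/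
theorem levenshtein_bag_of_letters_bound {σ : Type*} [Fintype σ] [DecidableEq σ]
    (x y : List σ) (d : ℕ) (h : levenshtein Levenshtein.defaultCost x y = d) :
    Real.sqrt (∑ a : σ, ((x.count a : ℝ) - (y.count a : ℝ)) ^ 2) ≤ Real.sqrt 2 * d := by
  rw [← dist_bagOfLetters, ← h]
  refine dist_le_mul_levenshtein _ bagOfLetters √2 (fun a w => ?_) (fun a w => ?_)
    dist_bagOfLetters_cons_cons_le x y
  · simp [defaultCost, dist_bagOfLetters_cons]
  · simp [defaultCost, dist_comm (bagOfLetters w), dist_bagOfLetters_cons]
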